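/- arXiv:2107.03310 — 2 statements merged into one kernel-verified Lean document; each statement's English description precedes it below -/
import Mathlib

section
/- Let W_aff = ZΦ ⋊ W_fin be the affine Weyl group of an irreducible root system Φ with Weyl group W_fin, and let x, y ∈ W_aff be of minimal length in their cosets W_fin x and W_fin y respectively. Then there exists at most one reflection t ∈ W_aff with ty < y (Bruhat order) and ty ∈ W_fin x. -/
open scoped RealInnerProductSpace Pointwise Classical

/-- The Bruhat order on a Coxeter group: `u < w` iff there is a chain
`u = u₀, u₁, …, u_k = w` (`k ≥ 1`) where each `u_{j+1} = t_j * u_j` for a reflection `t_j`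
and the lengths strictly increase along the chain. -/
def CoxeterSystem.bruhatLT {B W : Type*} [Group W] {M : CoxeterMatrix B}
    (cs : CoxeterSystem M W) (u w : W) : Prop :=
  Relation.TransGen
    (fun a b : W => (∃ t : W, cs.IsReflection t ∧ b = t * a) ∧ cs.length a < cs.length b) u w

noncomputable section AffineWeyl

variable {V : Type*} [NormedAddCommGroup V] [InnerProductSpace ℝ V] [FiniteDimensional ℝ V]

/-- A (reduced, crystallographic, irreducible) root system in a finite-dimensional real
inner product space `V`. -/
structure RootSystemIn (V : Type*) [NormedAddCommGroup V] [InnerProductSpace ℝ V] : Type _ where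
  /-- the set of roots -/
  roots : Set V
  finite : roots.Finite
  nonempty : roots.Nonempty
  ne_zero : ∀ α ∈ roots, α ≠ 0
  span_top : Submodule.span ℝ roots = ⊤
  /-- the root system is reduced -/
  reduced : ∀ α ∈ roots, ∀ t : ℝ, t • α ∈ roots → t = 1 ∨ t = -1
  /-- roots are permuted by the reflection in (the hyperplane orthogonal to) each root -/
  reflect_mem : ∀ α ∈ roots, ∀ β ∈ roots, β - (2 * ⟪β, α⟫ / ⟪α, α⟫) • α ∈ roots
  /-- the root system is crystallographic: `⟨β, α^∨⟩ ∈ ℤ` -/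
  crystal : ∀ α ∈ roots, ∀ β ∈ roots, ∃ k : ℤ, 2 * ⟪β, α⟫ / ⟪α, α⟫ = (k : ℝ)
  /-- the root system is irreducible -/
  irred : ∀ A B : Set V, A ∪ B = roots → Disjoint A B →
    (∀ a ∈ A, ∀ b ∈ B, ⟪a, b⟫ = 0) → A = ∅ ∨ B = ∅

/-- `Pos` is a positive system for the root system `R`: the roots on which some linear
functional (nonvanishing on all roots) is positive. -/
def IsPositiveSystem (R : RootSystemIn V) (Pos : Set V) : Prop :=
  ∃ f : V →ₗ[ℝ] ℝ, (∀ α ∈ R.roots, f α ≠ 0) ∧ Pos = {α | α ∈ R.roots ∧ 0 < f α}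

/-- The (finite) reflection `s_α`, as an affine transformation of `V`. -/
def sfin (α : V) : V ≃ᵃ[ℝ] V :=
  ((Submodule.reflection (ℝ ∙ α)ᗮ).toLinearEquiv).toAffineEquiv

/-- The affine reflection `s_{α,m} = t_{mα} ∘ s_α`. -/
def saff (α : V) (m : ℤ) : V ≃ᵃ[ℝ] V :=
  AffineEquiv.constVAdd ℝ V ((m : ℝ) • α) * sfin α

/-- The finite Weyl group `W_fin`, generated by the reflections `s_α`, `α ∈ Φ`. -/
def Wfin (R : RootSystemIn V) : Subgroup (V ≃ᵃ[ℝ] V) :=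
  Subgroup.closure {g | ∃ α ∈ R.roots, g = sfin α}

/-- The affine Weyl group `W_aff = ℤΦ ⋊ W_fin`, generated by the reflections `s_α` and the
translations by elements of the root lattice `ℤΦ`. -/
def Waff (R : RootSystemIn V) : Subgroup (V ≃ᵃ[ℝ] V) :=
  Subgroup.closure ({g | ∃ α ∈ R.roots, g = sfin α} ∪
    {g | ∃ γ ∈ AddSubgroup.closure R.roots, g = AffineEquiv.constVAdd ℝ V γ})

/-- The base (set of simple roots) of a positive system: the indecomposable positive roots. -/
def baseOf (Pos : Set V) : Set V :=
  {α | α ∈ Pos ∧ ¬∃ β ∈ Pos, ∃ γ ∈ Pos, α = β + γ}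

/-- `αh` is the highest short root: it is a positive root of minimal length, and it dominates
every other root of the same length. -/
def IsHighestShortRoot (R : RootSystemIn V) (Pos : Set V) (αh : V) : Prop :=
  αh ∈ Pos ∧ (∀ β ∈ R.roots, ⟪αh, αh⟫ ≤ ⟪β, β⟫) ∧
    ∀ β ∈ Pos, ⟪β, β⟫ = ⟪αh, αh⟫ → αh - β ∈ AddSubmonoid.closure (baseOf Pos)

/-- The Coxeter system `cs` on `W_aff` is the standard one: its simple reflections are the
`s_α`, `α ∈ Δ`, together with `s_{αh,1}`; its reflections are the `s_{α,m}`, `α ∈ Φ⁺`, `m ∈ ℤ`. -/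
def IsAffineCoxeterStructure (R : RootSystemIn V) {B : Type*} {M : CoxeterMatrix B}
    (cs : CoxeterSystem M (Waff R)) (Pos : Set V) (αh : V) : Prop :=
  ({g : ↥(Waff R) | ∃ i, g = cs.simple i} =
      {g : ↥(Waff R) | ∃ α ∈ baseOf Pos, (g : V ≃ᵃ[ℝ] V) = sfin α} ∪
        {g : ↥(Waff R) | (g : V ≃ᵃ[ℝ] V) = saff αh 1}) ∧
    ∀ t : ↥(Waff R), cs.IsReflection t ↔ ∃ α ∈ Pos, ∃ m : ℤ, (t : V ≃ᵃ[ℝ] V) = saff α m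

/-- The set `W_aff⁺` of elements of minimal length in their coset `W_fin x`. -/
def WaffPlus (R : RootSystemIn V) {B : Type*} {M : CoxeterMatrix B}
    (cs : CoxeterSystem M (Waff R)) : Set ↥(Waff R) :=
  {x | ∀ w : ↥(Waff R), (w : V ≃ᵃ[ℝ] V) ∈ Wfin R → cs.length x ≤ cs.length (w * x)}

/-- Half sum of positive roots. -/
def rhoOf (Pos : Set V) : V := (2⁻¹ : ℝ) • ∑ᶠ α ∈ Pos, α

/-- The `p`-dilated dot action of an affine transformation `g = t_γ w` on `V`:
`g · x = w(x+ρ) + pγ - ρ`. -/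
def dotAct (p : ℕ) (ρ : V) (g : V ≃ᵃ[ℝ] V) (x : V) : V :=
  (p : ℝ) • g ((p : ℝ)⁻¹ • (x + ρ)) - ρ

/-- The fundamental alcove `C_fund = { x : 0 < ⟨x+ρ, α^∨⟩ < p for all α ∈ Φ⁺ }`. -/
def Cfund (p : ℕ) (Pos : Set V) (ρ : V) : Set V :=
  {v | ∀ α ∈ Pos, 0 < 2 * ⟪v + ρ, α⟫ / ⟪α, α⟫ ∧ 2 * ⟪v + ρ, α⟫ / ⟪α, α⟫ < p}

/-- `H` separates `A` and `B`: they lie in different connected components of `Hᶜ`. -/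
def Separates (H A B : Set V) : Prop :=
  A ⊆ Hᶜ ∧ B ⊆ Hᶜ ∧ ∀ a ∈ A, ∀ b ∈ B,
    connectedComponentIn Hᶜ a ≠ connectedComponentIn Hᶜ b

/-- The sign `det(w) = ±1` of an affine transformation (the sign of the determinant of its
linear part), as an integer. -/
def sgnW (g : V ≃ᵃ[ℝ] V) : ℤ :=
  if LinearMap.det (g.linear : V →ₗ[ℝ] V) < 0 then -1 else 1

/-- For a reflection `t = s_{α,m}` with `α ∈ Φ⁺`, `mval t = m`. -/
def mval (Pos : Set V) (t : V ≃ᵃ[ℝ] V) : ℤ :=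
  if h : ∃ am : V × ℤ, am.1 ∈ Pos ∧ t = saff am.1 am.2 then h.choose.2 else 0

/-- Defining relations of the anti-spherical module `sign ⊗_{ℤ[W_fin]} ℤ[W_aff]`. -/
def relSet (R : RootSystemIn V) : Set (↥(Waff R) →₀ ℤ) :=
  {f | ∃ w x : ↥(Waff R), (w : V ≃ᵃ[ℝ] V) ∈ Wfin R ∧
    f = Finsupp.single (w * x) 1 - sgnW (w : V ≃ᵃ[ℝ] V) • Finsupp.single x 1}

/-- The anti-spherical module `M_asph = sign ⊗_{ℤ[W_fin]} ℤ[W_aff]`, presented as the quotient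
of the free `ℤ`-module on `W_aff` by the relations `(w x) - det(w)·x` for `w ∈ W_fin`. -/
abbrev Masph (R : RootSystemIn V) :=
  (↥(Waff R) →₀ ℤ) ⧸ Submodule.span ℤ (relSet R)

/-- The standard element `N_x ∈ M_asph`. -/
def NN (R : RootSystemIn V) (x : ↥(Waff R)) : Masph R :=
  Submodule.Quotient.mk (Finsupp.single x 1)

/-- Right multiplication by `y ∈ W_aff` on the anti-spherical module: `N_x · y = N_{xy}`. -/
def rmul (R : RootSystemIn V) (y : ↥(Waff R)) : Masph R →ₗ[ℤ] Masph R :=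
  Submodule.mapQ _ _ (Finsupp.lmapDomain ℤ ℤ (fun x => x * y))
    (by
      rw [Submodule.span_le]
      rintro f ⟨w, x, hw, rfl⟩
      simp only [SetLike.mem_coe, Submodule.mem_comap, map_sub, map_zsmul,
        Finsupp.lmapDomain_apply, Finsupp.mapDomain_single]
      exact Submodule.subset_span ⟨w, x * y, hw, by rw [mul_assoc]⟩)

/-- The Jantzen sum formula element
`JSF_x = Σ_{t ∈ R_L(x)} ν_p(m(t)·p) · N_{tx} ∈ M_asph`. -/
def JSF (R : RootSystemIn V) (Pos : Set V) (p : ℕ) {B : Type*} {M : CoxeterMatrix B}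
    (cs : CoxeterSystem M (Waff R)) (x : ↥(Waff R)) : Masph R :=
  ∑ᶠ t ∈ {t : ↥(Waff R) | cs.IsReflection t ∧ cs.bruhatLT (t * x) x},
    (padicValInt p (mval Pos (t : V ≃ᵃ[ℝ] V) * p) : ℤ) • NN R (t * x)

end AffineWeyl

/-!
Minimality of `y` in `W_fin y` forces a reflection `t` with `t y < y` to lie outside `W_fin`, so
`t = s_{α,m}` with `m ≠ 0`. If `t y` and `t' y` both lie in `W_fin x`, then
`t' t = (t' y) (t y)⁻¹ ∈ W_fin` fixes `0`, and since `t'` is an involution, `t 0 = t' 0`, i.e.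
`m α = m' α'`. For `m ≠ 0` the reflection `s_{α,m} = t_{mα} s_{mα}` is determined by `m α`.
-/

theorem CoxeterSystem.bruhatLT.length_lt {B W : Type*} [Group W] {M : CoxeterMatrix B}
    {cs : CoxeterSystem M W} {u w : W} (h : cs.bruhatLT u w) : cs.length u < cs.length w := by
  induction h with
  | single h => exact h.2
  | tail _ h ih => exact ih.trans h.2

section AffineReflections

variable {V : Type*} [NormedAddCommGroup V] [InnerProductSpace ℝ V]

theorem sfin_smul {c : ℝ} (hc : c ≠ 0) (α : V) : sfin (c • α) = sfin α := by
  simp only [sfin, Submodule.span_singleton_smul_eq hc.isUnit]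

theorem sfin_apply_zero (α : V) : sfin α 0 = 0 :=
  map_zero (Submodule.reflection (ℝ ∙ α)ᗮ)

theorem saff_apply_zero (α : V) (m : ℤ) : saff α m 0 = (m : ℝ) • α := by
  simp [saff, sfin_apply_zero]

theorem saff_zero (α : V) : saff α 0 = sfin α := by
  ext v; simp [saff]

theorem saff_eq_of_smul_eq {α β : V} {m n : ℤ} (hm : m ≠ 0) (hn : n ≠ 0)
    (h : (m : ℝ) • α = (n : ℝ) • β) : saff α m = saff β n := by
  rw [saff, saff, h, ← sfin_smul (Int.cast_ne_zero.2 hm) α, h,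
    sfin_smul (Int.cast_ne_zero.2 hn)]

theorem apply_zero_of_mem_Wfin (R : RootSystemIn V) {g : V ≃ᵃ[ℝ] V} (hg : g ∈ Wfin R) :
    g 0 = 0 := by
  induction hg using Subgroup.closure_induction with
  | mem g hg => obtain ⟨α, -, rfl⟩ := hg; exact sfin_apply_zero α
  | one => rfl
  | mul g h _ _ ihg ihh => simp [AffineEquiv.coe_mul, ihh, ihg]
  | inv g _ ih => nth_rw 1 [← ih]; exact g.symm_apply_apply 0

theorem sfin_mem_Wfin (R : RootSystemIn V) {α : V} (hα : α ∈ R.roots) : sfin α ∈ Wfin R :=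
  Subgroup.subset_closure ⟨α, hα, rfl⟩

theorem coe_notMem_Wfin_of_bruhatLT {R : RootSystemIn V} {B : Type*} {M : CoxeterMatrix B}
    {cs : CoxeterSystem M (Waff R)} {u y : Waff R} (hy : y ∈ WaffPlus R cs)
    (h : cs.bruhatLT (u * y) y) : (u : V ≃ᵃ[ℝ] V) ∉ Wfin R :=
  fun hu => (hy u hu).not_gt h.length_lt

theorem apply_zero_eq_of_mul_mem_Wfin (R : RootSystemIn V) {g h : V ≃ᵃ[ℝ] V} (hh : h * h = 1)
    (hhg : h * g ∈ Wfin R) : g 0 = h 0 := by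
  calc g 0 = (h * h * g) 0 := by rw [hh, one_mul]
    _ = h ((h * g) 0) := rfl
    _ = h 0 := by rw [apply_zero_of_mem_Wfin R hhg]

theorem exists_eq_saff_of_bruhatLT {R : RootSystemIn V} {Pos : Set V}
    (hPos : IsPositiveSystem R Pos) {αh : V} {B : Type*} {M : CoxeterMatrix B}
    {cs : CoxeterSystem M (Waff R)} (hcs : IsAffineCoxeterStructure R cs Pos αh)
    {t y : Waff R} (hy : y ∈ WaffPlus R cs) (ht : cs.IsReflection t)
    (hlt : cs.bruhatLT (t * y) y) : ∃ α : V, ∃ m : ℤ, m ≠ 0 ∧ (t : V ≃ᵃ[ℝ] V) = saff α m := by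
  obtain ⟨α, hα, m, htα⟩ := (hcs.2 t).1 ht
  refine ⟨α, m, ?_, htα⟩
  rintro rfl
  obtain ⟨f, -, rfl⟩ := hPos
  rw [saff_zero] at htα
  exact coe_notMem_Wfin_of_bruhatLT hy hlt (htα ▸ sfin_mem_Wfin R hα.1)

end AffineReflections

theorem atMostOne_reflection_coset_general
    {V : Type*} [NormedAddCommGroup V] [InnerProductSpace ℝ V]
    (R : RootSystemIn V) (Pos : Set V) (hPos : IsPositiveSystem R Pos)
    (αh : V)
    {B : Type*} {M : CoxeterMatrix B} (cs : CoxeterSystem M (Waff R))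
    (hcs : IsAffineCoxeterStructure R cs Pos αh)
    (x y : ↥(Waff R)) (hy : y ∈ WaffPlus R cs)
    (t t' : ↥(Waff R))
    (ht : cs.IsReflection t ∧ cs.bruhatLT (t * y) y ∧
      ∃ w : ↥(Waff R), (w : V ≃ᵃ[ℝ] V) ∈ Wfin R ∧ t * y = w * x)
    (ht' : cs.IsReflection t' ∧ cs.bruhatLT (t' * y) y ∧
      ∃ w : ↥(Waff R), (w : V ≃ᵃ[ℝ] V) ∈ Wfin R ∧ t' * y = w * x) :
    t = t' := by
  obtain ⟨htr, htlt, w, hw, htw⟩ := ht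
  obtain ⟨ht'r, ht'lt, w', hw', ht'w'⟩ := ht'
  obtain ⟨α, m, hm, htα⟩ := exists_eq_saff_of_bruhatLT hPos hcs hy htr htlt
  obtain ⟨α', m', hm', ht'α'⟩ := exists_eq_saff_of_bruhatLT hPos hcs hy ht'r ht'lt
  have hprod : t' * t = w' * w⁻¹ := by
    calc t' * t = (t' * y) * (t⁻¹ * y)⁻¹ := by group
      _ = w' * w⁻¹ := by rw [htr.inv, htw, ht'w']; group
  have hmem : (t' : V ≃ᵃ[ℝ] V) * t ∈ Wfin R := by
    rw [← Subgroup.coe_mul, hprod]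
    exact mul_mem hw' (inv_mem hw)
  have h0 := apply_zero_eq_of_mul_mem_Wfin R (by rw [← Subgroup.coe_mul, ht'r.mul_self]; rfl) hmem
  rw [htα, ht'α', saff_apply_zero, saff_apply_zero] at h0
  exact Subtype.ext (by rw [htα, ht'α', saff_eq_of_smul_eq hm hm' h0])

/-- For `x, y ∈ W_aff⁺` (minimal length in their cosets `W_fin x`, `W_fin y`), there is at most
one reflection `t` of `W_aff` with `t y < y` in the Bruhat order and `t y ∈ W_fin x`. -/
theorem atMostOne_reflection_coset
    {V : Type*} [NormedAddCommGroup V] [InnerProductSpace ℝ V] [FiniteDimensional ℝ V]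
    (R : RootSystemIn V) (Pos : Set V) (hPos : IsPositiveSystem R Pos)
    (αh : V) (hαh : IsHighestShortRoot R Pos αh)
    {B : Type*} {M : CoxeterMatrix B} (cs : CoxeterSystem M (Waff R))
    (hcs : IsAffineCoxeterStructure R cs Pos αh)
    (x y : ↥(Waff R)) (hx : x ∈ WaffPlus R cs) (hy : y ∈ WaffPlus R cs)
    (t t' : ↥(Waff R))
    (ht : cs.IsReflection t ∧ cs.bruhatLT (t * y) y ∧
      ∃ w : ↥(Waff R), (w : V ≃ᵃ[ℝ] V) ∈ Wfin R ∧ t * y = w * x)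
    (ht' : cs.IsReflection t' ∧ cs.bruhatLT (t' * y) y ∧
      ∃ w : ↥(Waff R), (w : V ≃ᵃ[ℝ] V) ∈ Wfin R ∧ t' * y = w * x) :
    t = t' :=
  atMostOne_reflection_coset_general R Pos hPos αh cs hcs x y hy t t' ht ht'
end

section
/- Let M, N be free Z_p-modules of finite rank and φ : M → N a Z_p-linear map with φ ⊗ Q_p an isomorphism. Define F̄^i(φ) as the image of φ⁻¹(p^i N) in M ⊗ F_p. Then max{ i ≥ 0 : F̄^i(φ) ≠ 0 } equals the maximal torsion exponent tmax(coker φ), i.e. the least d such that p^d annihilates coker φ. -/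
/-!
Since `φ ⊗ ℚ_p` is bijective, `φ` is injective and, after clearing denominators, its cokernel is
a finitely generated torsion module, hence killed by `p ^ d` with `d = tmax(coker φ)` minimal.
If `φ x = p ^ i z` with `i > d`, write `p ^ d z = φ w`; injectivity gives `x = p ^ (i - d) w ∈ pM`,
so `F̄ⁱ = 0`. If `d ≥ 1`, pick `y` with `p ^ (d - 1) y ∉ im φ` and `φ x = p ^ d y`: then `x ∈ Fᵈ`,
and `x = p x'` would give `φ x' = p ^ (d - 1) y` after cancelling `p` in the torsion-free `N`.
-/

open Pointwise TensorProduct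
open scoped nonZeroDivisors

section Localization

variable {R A M N : Type*} [CommRing R] [CommRing A] [Algebra R A] (S : Submonoid R)
  [IsLocalization S A] [AddCommGroup M] [Module R M] [AddCommGroup N] [Module R N]
  {φ : M →ₗ[R] N}

theorem LinearMap.injective_of_injective_baseChange (hS : S ≤ R⁰) [Module.IsTorsionFree R M]
    (h : Function.Injective (φ.baseChange A)) : Function.Injective φ := by
  refine (injective_iff_map_eq_zero φ).mpr fun m hm => ?_
  have : TensorProduct.mk R A M 1 m = TensorProduct.mk R A M 1 0 :=
    h (by simp [hm])
  obtain ⟨c, hc⟩ := IsLocalizedModule.exists_of_eq (S := S) this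
  exact (Module.IsTorsionFree.isSMulRegular (isRegular_iff_mem_nonZeroDivisors.mpr (hS c.2)))
    (by simpa [Submonoid.smul_def] using hc)

theorem LinearMap.isTorsion'_quotient_range_of_surjective_baseChange
    (h : Function.Surjective (φ.baseChange A)) :
    Module.IsTorsion' (N ⧸ LinearMap.range φ) S := by
  intro x
  obtain ⟨y, rfl⟩ := Submodule.Quotient.mk_surjective _ x
  obtain ⟨t, ht⟩ := h (1 ⊗ₜ y)
  obtain ⟨⟨m, s⟩, hs⟩ := IsLocalizedModule.surj S (TensorProduct.mk R A M 1) t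
  have : TensorProduct.mk R A N 1 (φ m) = TensorProduct.mk R A N 1 ((s : R) • y) := by
    have := congrArg (φ.baseChange A) hs
    rw [Submonoid.smul_def, LinearMap.map_smul_of_tower, ht] at this
    simpa [TensorProduct.tmul_smul] using this.symm
  obtain ⟨c, hc⟩ := IsLocalizedModule.exists_of_eq (S := S) this
  refine ⟨c * s, ?_⟩
  rw [Submonoid.smul_def, ← Submodule.Quotient.mk_smul, Submodule.Quotient.mk_eq_zero]
  exact ⟨c • m, by simpa [Submonoid.smul_def, mul_smul] using hc⟩

end Localization

theorem IsDiscreteValuationRing.exists_isTorsionBy_pow {R Q : Type*} [CommRing R] [IsDomain R]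
    [IsDiscreteValuationRing R] [AddCommGroup Q] [Module R Q] [Module.Finite R Q]
    {ϖ : R} (hϖ : Irreducible ϖ) (hQ : Module.IsTorsion R Q) :
    ∃ d : ℕ, Module.IsTorsionBy R Q (ϖ ^ d) := by
  obtain ⟨a, ha, ha0⟩ := Submodule.annihilator_top_inter_nonZeroDivisors hQ
  obtain ⟨d, u, hu⟩ := associated_pow_irreducible (nonZeroDivisors.ne_zero ha0) hϖ
  refine ⟨d, fun x => ?_⟩
  rw [← hu, mul_comm, mul_smul, Submodule.mem_annihilator.mp ha x Submodule.mem_top, smul_zero]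

namespace LinearMap

variable {R M N : Type*} [CommRing R] [AddCommGroup M] [Module R M] [AddCommGroup N] [Module R N]
  (ϖ : R) (φ : M →ₗ[R] N)

/-- The paper's `F̄ⁱ(φ)`, with `M ⊗ 𝔽_p` modelled as `M ⧸ ϖ • ⊤`. -/
def reducedFiltration (i : ℕ) : Submodule R (M ⧸ ϖ • (⊤ : Submodule R M)) :=
  (Submodule.comap φ (ϖ ^ i • ⊤)).map (ϖ • (⊤ : Submodule R M)).mkQ

variable {ϖ φ}

theorem reducedFiltration_eq_bot_of_lt (hφ : Function.Injective φ) {d i : ℕ}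
    (hd : Module.IsTorsionBy R (N ⧸ range φ) (ϖ ^ d)) (hi : d < i) :
    φ.reducedFiltration ϖ i = ⊥ := by
  rw [reducedFiltration, Submodule.eq_bot_iff]
  rintro _ ⟨x, hx, rfl⟩
  obtain ⟨z, -, hz⟩ := (Submodule.mem_smul_pointwise_iff_exists _ _ _).mp hx
  obtain ⟨w, hw⟩ := (Module.isTorsionBy_quotient_iff _ _).mp hd z
  have hx_eq : x = ϖ • ϖ ^ (i - d - 1) • w := by
    refine hφ ?_
    rw [map_smul, map_smul, hw, smul_smul, smul_smul, ← pow_succ', ← pow_add,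
      show i - d - 1 + 1 + d = i by omega, hz]
  rw [Submodule.mkQ_apply, Submodule.Quotient.mk_eq_zero, hx_eq]
  exact Submodule.smul_mem_pointwise_smul _ _ _ Submodule.mem_top

theorem reducedFiltration_succ_ne_bot (hN : IsSMulRegular N ϖ) {d : ℕ} {y : N}
    (hy : ϖ ^ (d + 1) • y ∈ range φ) (hy' : ϖ ^ d • y ∉ range φ) :
    φ.reducedFiltration ϖ (d + 1) ≠ ⊥ := by
  obtain ⟨x, hx⟩ := hy
  rw [reducedFiltration, Submodule.ne_bot_iff]
  refine ⟨_, Submodule.mem_map_of_mem (Submodule.mem_comap.mpr (hx ▸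
    Submodule.smul_mem_pointwise_smul _ _ _ Submodule.mem_top)), fun hx0 => hy' ?_⟩
  rw [Submodule.mkQ_apply, Submodule.Quotient.mk_eq_zero] at hx0
  obtain ⟨x', -, rfl⟩ := (Submodule.mem_smul_pointwise_iff_exists _ _ _).mp hx0
  refine ⟨x', hN ?_⟩
  simp only [← map_smul, hx, pow_succ', mul_smul]

theorem sSup_reducedFiltration_ne_bot (hφ : Function.Injective φ) (hN : IsSMulRegular N ϖ)
    (htors : ∃ d : ℕ, Module.IsTorsionBy R (N ⧸ range φ) (ϖ ^ d)) :
    sSup {i : ℕ | φ.reducedFiltration ϖ i ≠ ⊥} =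
      sInf {d : ℕ | Module.IsTorsionBy R (N ⧸ range φ) (ϖ ^ d)} := by
  set d := sInf {d : ℕ | Module.IsTorsionBy R (N ⧸ range φ) (ϖ ^ d)}
  have hd : Module.IsTorsionBy R (N ⧸ range φ) (ϖ ^ d) := Nat.sInf_mem htors
  have hle : ∀ i, φ.reducedFiltration ϖ i ≠ ⊥ → i ≤ d := fun i hi =>
    not_lt.mp fun hlt => hi (reducedFiltration_eq_bot_of_lt hφ hd hlt)
  refine le_antisymm (csSup_le' hle) ?_
  rcases Nat.eq_zero_or_pos d with hd0 | hdpos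
  · exact hd0.le.trans (Nat.zero_le _)
  obtain ⟨k, hk⟩ := Nat.exists_eq_add_one_of_ne_zero hdpos.ne'
  have hk_not : ¬ Module.IsTorsionBy R (N ⧸ range φ) (ϖ ^ k) :=
    Nat.notMem_of_lt_sInf (show k < d by omega)
  obtain ⟨y, hy⟩ := not_forall.mp (mt (Module.isTorsionBy_quotient_iff _ _).mpr hk_not)
  rw [hk, Module.isTorsionBy_quotient_iff] at hd
  exact hk ▸ le_csSup ⟨d, hle⟩ (reducedFiltration_succ_ne_bot hN (hd y) hy)

end LinearMap

theorem max_filtration_eq_tmax_coker_general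
    {p : ℕ} [Fact p.Prime] {M N : Type*}
    [AddCommGroup M] [Module ℤ_[p] M] [Module.Free ℤ_[p] M]
    [AddCommGroup N] [Module ℤ_[p] N] [Module.Free ℤ_[p] N] [Module.Finite ℤ_[p] N]
    (φ : M →ₗ[ℤ_[p]] N)
    (hφ : Function.Bijective (LinearMap.baseChange ℚ_[p] φ))
    (Fbar : ℕ → Submodule ℤ_[p] (M ⧸ ((p : ℤ_[p]) • (⊤ : Submodule ℤ_[p] M))))
    (hFbar : ∀ i, Fbar i =
      Submodule.map ((p : ℤ_[p]) • (⊤ : Submodule ℤ_[p] M)).mkQ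
        (Submodule.comap φ ((p : ℤ_[p]) ^ i • (⊤ : Submodule ℤ_[p] N)))) :
    sSup {i : ℕ | Fbar i ≠ ⊥} =
      sInf {d : ℕ | ∀ x : N ⧸ LinearMap.range φ, (p : ℤ_[p]) ^ d • x = 0} := by
  have hinj : Function.Injective φ :=
    φ.injective_of_injective_baseChange ℤ_[p]⁰ le_rfl hφ.injective
  have hN : IsSMulRegular N (p : ℤ_[p]) :=
    Module.IsTorsionFree.isSMulRegular (IsRegular.of_ne_zero PadicInt.prime_p.ne_zero)
  have htors : ∃ d : ℕ, Module.IsTorsionBy ℤ_[p] (N ⧸ LinearMap.range φ) ((p : ℤ_[p]) ^ d) :=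
    IsDiscreteValuationRing.exists_isTorsionBy_pow PadicInt.irreducible_p
      (φ.isTorsion'_quotient_range_of_surjective_baseChange ℤ_[p]⁰ hφ.surjective)
  obtain rfl : Fbar = φ.reducedFiltration (p : ℤ_[p]) := funext hFbar
  exact φ.sSup_reducedFiltration_ne_bot hinj hN htors

/-- Let `M, N` be free `ℤ_[p]`-modules of finite rank and `φ : M → N` a `ℤ_[p]`-linear map
with `φ ⊗ ℚ_[p]` an isomorphism. Let `F̄^i(φ)` be the image of `F^i(φ) = φ⁻¹(pⁱ N)` in
`M ⊗ 𝔽_p = M/pM`. Then `max{ i ≥ 0 : F̄^i(φ) ≠ 0 }` equals the maximal torsion exponent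
`tmax(coker φ)`, the least `d` such that `p^d` annihilates `coker φ`. -/
theorem max_filtration_eq_tmax_coker
    {p : ℕ} [Fact p.Prime] {M N : Type*}
    [AddCommGroup M] [Module ℤ_[p] M] [Module.Free ℤ_[p] M] [Module.Finite ℤ_[p] M]
    [AddCommGroup N] [Module ℤ_[p] N] [Module.Free ℤ_[p] N] [Module.Finite ℤ_[p] N]
    (φ : M →ₗ[ℤ_[p]] N)
    (hφ : Function.Bijective (LinearMap.baseChange ℚ_[p] φ))
    (Fbar : ℕ → Submodule ℤ_[p] (M ⧸ ((p : ℤ_[p]) • (⊤ : Submodule ℤ_[p] M))))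
    (hFbar : ∀ i, Fbar i =
      Submodule.map ((p : ℤ_[p]) • (⊤ : Submodule ℤ_[p] M)).mkQ
        (Submodule.comap φ ((p : ℤ_[p]) ^ i • (⊤ : Submodule ℤ_[p] N)))) :
    sSup {i : ℕ | Fbar i ≠ ⊥} =
      sInf {d : ℕ | ∀ x : N ⧸ LinearMap.range φ, (p : ℤ_[p]) ^ d • x = 0} :=
  max_filtration_eq_tmax_coker_general φ hφ Fbar hFbar
end
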